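/- arXiv:1508.03420 — 5 statements merged into one kernel-verified Lean document; each statement's English description precedes it below -/
import Mathlib

section
/- In the two-user system with 0 < 2α < β and arrivals a_1 ≤ a_2 with a_2 - 1/β ≤ a_1 and d_1 ≥ a_2, the pair d_1 = (1 + β a_1 - α a_2)/(β - α) and d_2 = (1 + β a_2 + α(d_1 - a_2))/β satisfies the travel-dynamics equations ∫_{a_i}^{d_i} v(t) dt = 1 for i = 1,2 (where v(t) = β - α(q(t)-1) and q(t) counts users present), provided the resulting order is a_1 ≤ a_2 ≤ d_1 ≤ d_2. -/
open MeasureTheory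

lemma indIntegrable (c d a b : ℝ) :
    IntervalIntegrable ((Set.Icc c d).indicator (fun _ => (1:ℝ))) volume a b := by
  rw [intervalIntegrable_iff]
  exact (integrableOn_const measure_Ioc_lt_top.ne).indicator measurableSet_Icc

lemma indIntegral (c d a b : ℝ) (hab : a ≤ b) :
    ∫ t in a..b, (Set.Icc c d).indicator (fun _ => (1:ℝ)) t
      = (volume (Set.Icc c d ∩ Set.Ioc a b)).toReal := by
  rw [intervalIntegral.integral_of_le hab, setIntegral_indicator measurableSet_Icc,
    setIntegral_const, Set.inter_comm]
  simp
  rfl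

/-- Two-user system, overlapping case: with `0 < 2α < β`, arrivals `a₁ ≤ a₂`,
`a₂ - 1/β ≤ a₁`, the pair `d₁ = (1 + βa₁ - αa₂)/(β - α)` and
`d₂ = (1 + βa₂ + α(d₁ - a₂))/β` satisfies the travel-dynamics equations
`∫_{aᵢ}^{dᵢ} (β - α(q(t) - 1)) dt = 1`, provided the resulting order is
`a₁ ≤ a₂ ≤ d₁ ≤ d₂`. -/
theorem two_user_overlap_dynamics (α β a₁ a₂ : ℝ) (hα : 0 < α) (hαβ : 2 * α < β)
    (h12 : a₁ ≤ a₂) (hover : a₂ - 1 / β ≤ a₁) :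
    let d₁ := (1 + β * a₁ - α * a₂) / (β - α)
    let d₂ := (1 + β * a₂ + α * (d₁ - a₂)) / β
    let q : ℝ → ℝ := fun t =>
      (Set.Icc a₁ d₁).indicator (fun _ => (1 : ℝ)) t +
      (Set.Icc a₂ d₂).indicator (fun _ => (1 : ℝ)) t
    a₂ ≤ d₁ → d₁ ≤ d₂ →
      (∫ t in a₁..d₁, (β - α * (q t - 1))) = 1 ∧
      (∫ t in a₂..d₂, (β - α * (q t - 1))) = 1 := by
  intro d₁ d₂ q h1 h2
  have hβ : (0:ℝ) < β := by linarith
  have hβα : (0:ℝ) < β - α := by linarith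
  have h1d : a₁ ≤ d₁ := le_trans h12 h1
  have h2d : a₂ ≤ d₂ := le_trans h1 h2
  have hd1 : d₁ * (β - α) = 1 + β * a₁ - α * a₂ := by
    show (1 + β * a₁ - α * a₂) / (β - α) * (β - α) = _
    field_simp
  have hd2 : d₂ * β = 1 + β * a₂ + α * (d₁ - a₂) := by
    show (1 + β * a₂ + α * (d₁ - a₂)) / β * β = _
    field_simp
  -- measure computations
  have m11 : (volume (Set.Icc a₁ d₁ ∩ Set.Ioc a₁ d₁)).toReal = d₁ - a₁ := by
    rw [Set.inter_eq_self_of_subset_right Set.Ioc_subset_Icc_self, Real.volume_Ioc,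
      ENNReal.toReal_ofReal (by linarith)]
  have m21 : (volume (Set.Icc a₂ d₂ ∩ Set.Ioc a₁ d₁)).toReal = d₁ - a₂ := by
    have hle : volume (Set.Icc a₂ d₂ ∩ Set.Ioc a₁ d₁) ≤ volume (Set.Icc a₂ d₁) := by
      apply measure_mono
      rintro t ⟨⟨ht1, _⟩, _, ht2⟩
      exact ⟨ht1, ht2⟩
    have hge : volume (Set.Ioc a₂ d₁) ≤ volume (Set.Icc a₂ d₂ ∩ Set.Ioc a₁ d₁) := by
      apply measure_mono
      rintro t ⟨ht1, ht2⟩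
      exact ⟨⟨le_of_lt ht1, le_trans ht2 h2⟩, lt_of_le_of_lt h12 ht1, ht2⟩
    rw [Real.volume_Icc] at hle
    rw [Real.volume_Ioc] at hge
    have := le_antisymm hle hge
    rw [this, ENNReal.toReal_ofReal (by linarith)]
  have m22 : (volume (Set.Icc a₂ d₂ ∩ Set.Ioc a₂ d₂)).toReal = d₂ - a₂ := by
    rw [Set.inter_eq_self_of_subset_right Set.Ioc_subset_Icc_self, Real.volume_Ioc,
      ENNReal.toReal_ofReal (by linarith)]
  have m12 : (volume (Set.Icc a₁ d₁ ∩ Set.Ioc a₂ d₂)).toReal = d₁ - a₂ := by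
    have : Set.Icc a₁ d₁ ∩ Set.Ioc a₂ d₂ = Set.Ioc a₂ d₁ := by
      ext t
      constructor
      · rintro ⟨⟨_, ht1⟩, ht2, _⟩
        exact ⟨ht2, ht1⟩
      · rintro ⟨ht1, ht2⟩
        exact ⟨⟨le_trans h12 (le_of_lt ht1), ht2⟩, ht1, le_trans ht2 h2⟩
    rw [this, Real.volume_Ioc, ENNReal.toReal_ofReal (by linarith)]
  -- rewrite the integrand
  have hfun : ∀ a b : ℝ, (∫ t in a..b, (β - α * (q t - 1)))
      = (∫ t in a..b, ((β + α)
          - α * (Set.Icc a₁ d₁).indicator (fun _ => (1:ℝ)) t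
          - α * (Set.Icc a₂ d₂).indicator (fun _ => (1:ℝ)) t)) := by
    intro a b
    apply intervalIntegral.integral_congr
    intro t _
    simp only [q]
    ring
  have hint : ∀ a b : ℝ,
      (∫ t in a..b, ((β + α)
          - α * (Set.Icc a₁ d₁).indicator (fun _ => (1:ℝ)) t
          - α * (Set.Icc a₂ d₂).indicator (fun _ => (1:ℝ)) t))
      = (β + α) * (b - a)
        - α * (∫ t in a..b, (Set.Icc a₁ d₁).indicator (fun _ => (1:ℝ)) t)
        - α * (∫ t in a..b, (Set.Icc a₂ d₂).indicator (fun _ => (1:ℝ)) t) := by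
    intro a b
    rw [intervalIntegral.integral_sub
        (((intervalIntegrable_const).sub ((indIntegrable a₁ d₁ a b).const_mul α)))
        ((indIntegrable a₂ d₂ a b).const_mul α),
      intervalIntegral.integral_sub intervalIntegrable_const
        ((indIntegrable a₁ d₁ a b).const_mul α),
      intervalIntegral.integral_const, intervalIntegral.integral_const_mul,
      intervalIntegral.integral_const_mul, smul_eq_mul]
    ring
  constructor
  · rw [hfun, hint, indIntegral a₁ d₁ a₁ d₁ h1d, indIntegral a₂ d₂ a₁ d₁ h1d, m11, m21]
    linear_combination hd1
  · rw [hfun, hint, indIntegral a₁ d₁ a₂ d₂ h2d, indIntegral a₂ d₂ a₂ d₂ h2d, m12, m22]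
    linear_combination hd2
end

section
/- In the two-user system, both users spend the same amount of time in the system: d_2 - a_2 = d_1 - a_1. In particular, if a_2 - 1/β ≤ a_1 ≤ a_2 (overlapping case with a_1 ≤ a_2 ≤ d_1 ≤ d_2), then d_2 - a_2 = d_1 - a_1 = (1 - α(a_2 - a_1))/(β - α), and if a_1 ≤ a_2 - 1/β then d_2 - a_2 = d_1 - a_1 = 1/β. -/
/-- In the two-user system both users spend the same time in the system.
In the overlapping case (`a₂ - 1/β ≤ a₁ ≤ a₂`) with
`d₁ = (1 + βa₁ - αa₂)/(β-α)` and `d₂ = (1 + βa₂ + α(d₁ - a₂))/β`,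
`d₂ - a₂ = d₁ - a₁ = (1 - α(a₂ - a₁))/(β - α)`; in the disjoint case
(`a₁ ≤ a₂ - 1/β`) with `d₁ = a₁ + 1/β`, `d₂ = a₂ + 1/β`,
`d₂ - a₂ = d₁ - a₁ = 1/β`. -/
theorem two_user_equal_travel_times (α β a₁ a₂ : ℝ) (hα : 0 < α) (hαβ : 2 * α < β) :
    ((a₂ - 1 / β ≤ a₁ → a₁ ≤ a₂ →
      let d₁ := (1 + β * a₁ - α * a₂) / (β - α)
      let d₂ := (1 + β * a₂ + α * (d₁ - a₂)) / β
      d₂ - a₂ = d₁ - a₁ ∧ d₁ - a₁ = (1 - α * (a₂ - a₁)) / (β - α))) ∧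
    (a₁ ≤ a₂ - 1 / β →
      let d₁ := a₁ + 1 / β
      let d₂ := a₂ + 1 / β
      d₂ - a₂ = d₁ - a₁ ∧ d₁ - a₁ = 1 / β) := by
  have hβ : (0:ℝ) < β := by linarith
  constructor
  · intro _ _ d₁ d₂
    have hβα : (β - α) ≠ 0 := ne_of_gt (by linarith)
    constructor <;> (show _ = _; simp only [d₂, d₁]; field_simp; ring)
  · intro _ d₁ d₂
    exact ⟨by simp [d₁, d₂], by simp [d₁]⟩
end

section
/- In the two-user game with 0 < 2α < β and 0 < γ ≤ (β - 2α)/(α(β - α)), the pair a_1 = -1/(β-α) - γα(β² - 4αβ)/(2β²(β-2α)) and a_2 = -1/(β-α) + γα(β+2α)/(2β(β-2α)) satisfies the interior first-order equilibrium conditions a_1 = Y(a_2) and a_2 = X(a_1), where X(a) = -V/(2U) with U = ((β-2α)/(β-α))², V = (2(β-2α)(1+αa) - γα(β-α))/(β-α)², and Y(a) = -(2β(1 - αa) + γα(β-α))/(2β²). -/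
/-- With `0 < 2α < β` and `0 < γ ≤ (β-2α)/(α(β-α))`, the pair
`a₁ = -1/(β-α) - γα(β² - 4αβ)/(2β²(β-2α))` and
`a₂ = -1/(β-α) + γα(β+2α)/(2β(β-2α))` satisfies the interior first-order
equilibrium conditions `a₁ = Y(a₂)` and `a₂ = X(a₁)`. -/
theorem interior_CNE_first_order (α β γ : ℝ) (hα : 0 < α) (hαβ : 2 * α < β)
    (hγ : 0 < γ) (hγ2 : γ ≤ (β - 2 * α) / (α * (β - α))) :
    let U : ℝ := ((β - 2 * α) / (β - α)) ^ 2
    let V : ℝ → ℝ := fun a => (2 * (β - 2 * α) * (1 + α * a) - γ * α * (β - α)) / (β - α) ^ 2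
    let X : ℝ → ℝ := fun a => -(V a) / (2 * U)
    let Y : ℝ → ℝ := fun a => -(2 * β * (1 - α * a) + γ * α * (β - α)) / (2 * β ^ 2)
    let a₁ : ℝ := -1 / (β - α) - γ * α * (β ^ 2 - 4 * α * β) / (2 * β ^ 2 * (β - 2 * α))
    let a₂ : ℝ := -1 / (β - α) + γ * α * (β + 2 * α) / (2 * β * (β - 2 * α))
    a₁ = Y a₂ ∧ a₂ = X a₁ := by
  intro U V X Y a₁ a₂
  have hβ : (0:ℝ) < β := lt_trans (by linarith) hαβ
  have h1 : β - α ≠ 0 := by nlinarith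
  have h2 : β - 2 * α ≠ 0 := by nlinarith
  have h3 : β ≠ 0 := ne_of_gt hβ
  have h4 : β - α * 2 ≠ 0 := by linarith
  have h5 : β - α ≠ 0 := h1
  have h6 : (2:ℝ) * (β - 2 * α) ≠ 0 := by positivity
  constructor
  · show a₁ = Y a₂
    simp only [a₁, a₂, Y]
    field_simp
    ring
  · show a₂ = X a₁
    simp only [a₁, a₂, X, V, U]
    field_simp
    ring
end

section
/- For the two-user game with 0 < 2α < β and γ > (β-2α)/(α(β-α)), any pair (a_1, a_2) with a_1 = a_2 - 1/β and a_2 ∈ [-min{γα/(2β), 1/β}, -max{1/β - γα/(2(β-2α)), 0}] satisfies: the interval is nonempty, i.e., min{γα/(2β), 1/β} ≥ max{1/β - γα/(2(β-2α)), 0}. -/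
/-- For `β > 0`, `0 < 2α < β` and `γ > (β-2α)/(α(β-α))`, the interval
`[-min{γα/(2β), 1/β}, -max{1/β - γα/(2(β-2α)), 0}]` of Cournot Nash equilibrium
values of `a₂` is nonempty: `max{1/β - γα/(2(β-2α)), 0} ≤ min{γα/(2β), 1/β}`. -/
theorem CNE_interval_nonempty (α β γ : ℝ) (hβ : 0 < β) (hα : 0 < α)
    (hαβ : 2 * α < β) (hγ : (β - 2 * α) / (α * (β - α)) < γ) :
    max (1 / β - γ * α / (2 * (β - 2 * α))) 0 ≤ min (γ * α / (2 * β)) (1 / β) := by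
  have hβ2 : 0 < β - 2 * α := by linarith
  have hβα : 0 < α * (β - α) := by nlinarith
  have hγ' : β - 2 * α < γ * (α * (β - α)) := (div_lt_iff₀ hβα).mp hγ
  have hγpos : 0 < γ := by nlinarith
  rw [max_le_iff, le_min_iff, le_min_iff]
  refine ⟨⟨?_, ?_⟩, ?_, ?_⟩
  · rw [div_sub_div _ _ hβ.ne' (by positivity), div_le_div_iff₀ (by positivity) (by positivity)]
    nlinarith [sq_nonneg β, sq_nonneg α]
  · have : 0 ≤ γ * α / (2 * (β - 2 * α)) := by positivity
    linarith
  · positivity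
  · positivity
end

section
/- In the socially optimal two-user profile with desired departure times d_1* = d_2* = 0 and sufficiently large γ (specifically in the disjoint-travel regime a_1 = -3/(2β), a_2 = -1/(2β)), both users incur the same cost γ/β + 1/(4β²): user 1 departs at -1/(2β) and user 2 at 1/(2β), each with travel time 1/β. -/
/-- In the socially optimal two-user disjoint-travel regime `a₁ = -3/(2β)`,
`a₂ = -1/(2β)` (desired departure times `0`), user 1 departs at `-1/(2β)` and
user 2 at `1/(2β)`, each with travel time `1/β`, and both incur the same cost
`γ/β + 1/(4β²)`. -/
theorem socially_optimal_disjoint_costs (β γ : ℝ) (hβ : 0 < β) :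
    let a₁ : ℝ := -3 / (2 * β)
    let a₂ : ℝ := -1 / (2 * β)
    let d₁ : ℝ := a₁ + 1 / β
    let d₂ : ℝ := a₂ + 1 / β
    d₁ = -1 / (2 * β) ∧ d₂ = 1 / (2 * β) ∧
    d₁ - a₁ = 1 / β ∧ d₂ - a₂ = 1 / β ∧
    d₁ ^ 2 + γ * (d₁ - a₁) = γ / β + 1 / (4 * β ^ 2) ∧
    d₂ ^ 2 + γ * (d₂ - a₂) = γ / β + 1 / (4 * β ^ 2) := by
  have hβ' : β ≠ 0 := ne_of_gt hβ
  refine ⟨by field_simp; ring, by field_simp; ring, by ring, by ring, by field_simp; ring, by field_simp; ring⟩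
end
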